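/- arXiv:1907.07139 — 5 statements merged into one kernel-verified Lean document; each statement's English description precedes it below -/
import Mathlib

section
/- For m = 3 (so n = 8), the constant κ_3 equals 2·ln 2 + √2·ln(1+√2); that is, 4·∫₀¹ (1−x³)²/(1−x⁸) dx = 2·ln 2 + √2·ln(1+√2). -/
/-!
Cancelling the common factor `1 - x` turns the integrand into
`(1 - x)(1 + x + x²)² / ((1 + x)(1 + x²)(1 + x⁴))`. Since `1 + x⁴ = (x² - √2 x + 1)(x² + √2 x + 1)`,
partial fractions give a primitive that is a combination of `log (1 + x)` and logarithms of the
three quadratics `x² + b x + 1`, `b ∈ {0, -√2, √2}`. It vanishes at `0`, and its value at `1` is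
simplified with `(2 - √2)(2 + √2) = 2` and `(2 + √2) / (2 - √2) = (1 + √2)²`.
-/

open Real Set

noncomputable def logQuad (b x : ℝ) : ℝ := log (x ^ 2 + b * x + 1)

lemma sq_add_mul_add_one_pos {b : ℝ} (hb : b ^ 2 < 4) (x : ℝ) : 0 < x ^ 2 + b * x + 1 := by
  nlinarith [sq_nonneg (2 * x + b)]

lemma hasDerivAt_logQuad {b : ℝ} (hb : b ^ 2 < 4) (x : ℝ) :
    HasDerivAt (logQuad b) ((2 * x + b) / (x ^ 2 + b * x + 1)) x := by
  have hq : HasDerivAt (fun y => y ^ 2 + b * y + 1) (2 * x + b) x := by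
    simpa using ((hasDerivAt_pow 2 x).add ((hasDerivAt_id x).const_mul b)).add_const 1
  exact hq.log (sq_add_mul_add_one_pos hb x).ne'

lemma logQuad_zero (b : ℝ) : logQuad b 0 = 0 := by simp [logQuad]

lemma logQuad_one (b : ℝ) : logQuad b 1 = log (2 + b) := by
  rw [logQuad]; ring_nf

lemma sqrt_two_sq_lt_four : √2 ^ 2 < 4 := by norm_num

lemma neg_sqrt_two_sq_lt_four : (-√2) ^ 2 < 4 := by norm_num

noncomputable def kappaThreeIntegrand (x : ℝ) : ℝ :=
  (1 - x) * (1 + x + x ^ 2) ^ 2 / ((1 + x) * (x ^ 2 + 1) * (x ^ 4 + 1))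

noncomputable def kappaThreePrimitive (x : ℝ) : ℝ :=
  log (1 + x) / 2 + logQuad 0 x / 4 - (2 + √2) / 8 * logQuad (-√2) x
    - (2 - √2) / 8 * logQuad √2 x

/-- At `x = ±1` both sides are the junk value `_ / 0 = 0`, which matters at the endpoint `x = 1`
of the integral. -/
lemma one_sub_pow_three_sq_div_one_sub_pow_eight (x : ℝ) :
    (1 - x ^ 3) ^ 2 / (1 - x ^ 8) = kappaThreeIntegrand x := by
  rw [kappaThreeIntegrand]
  rcases eq_or_ne x 1 with rfl | h1
  · norm_num
  rcases eq_or_ne x (-1) with rfl | h2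
  · norm_num
  have h8 : 1 - x ^ 8 = (1 - x) * ((1 + x) * (x ^ 2 + 1) * (x ^ 4 + 1)) := by ring
  rw [h8, show (1 - x ^ 3) ^ 2 = (1 - x) * ((1 - x) * (1 + x + x ^ 2) ^ 2) by ring,
    mul_div_mul_left _ _ (sub_ne_zero.mpr h1.symm)]

lemma continuousOn_kappaThreeIntegrand : ContinuousOn kappaThreeIntegrand (Ioi (-1)) := by
  refine ContinuousOn.div (by fun_prop) (by fun_prop) fun x (hx : -1 < x) => ?_
  have : 0 < 1 + x := by linarith
  positivity

lemma kappaThreeIntegrand_eq_partial_fractions {x : ℝ} (hx : 1 + x ≠ 0) :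
    kappaThreeIntegrand x
      = 1 / (1 + x) / 2 + 2 * x / (x ^ 2 + 1) / 4
        - (2 + √2) / 8 * ((2 * x - √2) / (x ^ 2 - √2 * x + 1))
        - (2 - √2) / 8 * ((2 * x + √2) / (x ^ 2 + √2 * x + 1)) := by
  have hs : √2 ^ 2 = 2 := sq_sqrt zero_le_two
  have hm : 0 < x * (x - √2) + 1 := by linarith [sq_add_mul_add_one_pos neg_sqrt_two_sq_lt_four x]
  have hp : 0 < x * (x + √2) + 1 := by linarith [sq_add_mul_add_one_pos sqrt_two_sq_lt_four x]
  rw [kappaThreeIntegrand]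
  field_simp
  linear_combination (-16 - 48*x - 64*x^2 - 64*x^3 - 32*x^4 + 32*x^5 + 64*x^6 + 64*x^7
    + 48*x^8 + 16*x^9) * hs

lemma hasDerivAt_kappaThreePrimitive {x : ℝ} (hx : -1 < x) :
    HasDerivAt kappaThreePrimitive (kappaThreeIntegrand x) x := by
  have hlin : HasDerivAt (fun y => log (1 + y)) (1 / (1 + x)) x := by
    simpa using ((hasDerivAt_id x).const_add 1).log (by simp; linarith)
  have h := (((hlin.div_const 2).add ((hasDerivAt_logQuad (b := 0) (by norm_num) x).div_const 4)).sub
    ((hasDerivAt_logQuad neg_sqrt_two_sq_lt_four x).const_mul ((2 + √2) / 8))).sub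
    ((hasDerivAt_logQuad sqrt_two_sq_lt_four x).const_mul ((2 - √2) / 8))
  refine h.congr_deriv ?_
  rw [kappaThreeIntegrand_eq_partial_fractions (by linarith)]
  ring

lemma log_two_sub_sqrt_two_add_log_two_add_sqrt_two :
    log (2 - √2) + log (2 + √2) = log 2 := by
  have hs : √2 ^ 2 = 2 := sq_sqrt zero_le_two
  rw [← log_mul (by linarith [sqrt_two_lt_three_halves]) (by positivity)]
  congr 1
  linear_combination -hs

lemma log_two_add_sqrt_two_sub_log_two_sub_sqrt_two :
    log (2 + √2) - log (2 - √2) = 2 * log (1 + √2) := by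
  have hs : √2 ^ 2 = 2 := sq_sqrt zero_le_two
  have hpos : 0 < 2 - √2 := by linarith [sqrt_two_lt_three_halves]
  rw [← log_div (by positivity) hpos.ne', show 2 * log (1 + √2) = log ((1 + √2) ^ 2) by
    rw [log_pow]; norm_num]
  congr 1
  rw [div_eq_iff hpos.ne']
  linear_combination √2 * hs

lemma kappaThreePrimitive_zero : kappaThreePrimitive 0 = 0 := by
  simp [kappaThreePrimitive, logQuad_zero]

lemma kappaThreePrimitive_one :
    kappaThreePrimitive 1 = (2 * log 2 + √2 * log (1 + √2)) / 4 := by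
  simp only [kappaThreePrimitive, logQuad_one, add_zero, one_add_one_eq_two, ← sub_eq_add_neg]
  linear_combination (-1 / 4 : ℝ) * log_two_sub_sqrt_two_add_log_two_add_sqrt_two
    + √2 / 8 * log_two_add_sqrt_two_sub_log_two_sub_sqrt_two

/-- For `m = 3` (so `n = 8`), the constant `κ₃ = (n/2)·∫₀¹ (1-x^m)²/(1-x^n) dx`
equals `2·ln 2 + √2·ln(1+√2)`: `4·∫₀¹ (1-x³)²/(1-x⁸) dx = 2·ln 2 + √2·ln(1+√2)`. -/
theorem kappa_three_eq :
    4 * ∫ x in (0:ℝ)..1, (1 - x ^ 3) ^ 2 / (1 - x ^ 8) =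
      2 * Real.log 2 + Real.sqrt 2 * Real.log (1 + Real.sqrt 2) := by
  have hsub : uIcc (0 : ℝ) 1 ⊆ Ioi (-1) := by
    rw [uIcc_of_le zero_le_one]
    exact fun x hx => show -1 < x by linarith [hx.1]
  have hderiv : ∀ x ∈ uIcc (0 : ℝ) 1, HasDerivAt kappaThreePrimitive (kappaThreeIntegrand x) x :=
    fun x hx => hasDerivAt_kappaThreePrimitive (hsub hx)
  simp_rw [one_sub_pow_three_sq_div_one_sub_pow_eight]
  rw [intervalIntegral.integral_eq_sub_of_hasDerivAt hderiv
      (continuousOn_kappaThreeIntegrand.mono hsub).intervalIntegrable,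
    kappaThreePrimitive_one, kappaThreePrimitive_zero]
  ring
end

section
/- For m = 4 (so n = 10), the constant κ_4 equals (5/4)·ln 5 + (√5/2)·ln(2+√5); that is, 5·∫₀¹ (1−x⁴)²/(1−x¹⁰) dx = (5/4)·ln 5 + (√5/2)·ln(2+√5). -/
/-!
With `φ, ψ` the roots of `t ^ 2 = t + 1`, we have
`1 - x ^ 10 = (1 - x ^ 2) (x ^ 8 + x ^ 6 + x ^ 4 + x ^ 2 + 1)` and
`x ^ 8 + x ^ 6 + x ^ 4 + x ^ 2 + 1 = (x ^ 4 + ψ x ^ 2 + 1) (x ^ 4 + φ x ^ 2 + 1)`, so the integrand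
splits into partial fractions `2 c (1 - x ^ 2) / (x ^ 4 + (2 - c ^ 2) x ^ 2 + 1)` with `c ∈ {φ, ψ}`.
Each is the derivative of `log ((x ^ 2 + c x + 1) / (x ^ 2 - c x + 1))`, so it integrates over `[0, 1]`
to `log ((2 + c) / (2 - c)) = log ((2 c - 1) c ^ 3) = log √5 ± 3 log φ`; finally `2 + √5 = φ ^ 3`.
-/

open Real
open scoped goldenRatio

section PalindromicQuartic

variable {c d : ℝ}

lemma quadratic_pos (hc : c ^ 2 < 4) (x : ℝ) : 0 < x ^ 2 + c * x + 1 := by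
  nlinarith [sq_nonneg (2 * x + c)]

lemma palindromic_quartic_eq_mul (hd : c ^ 2 + d = 2) (x : ℝ) :
    x ^ 4 + d * x ^ 2 + 1 = (x ^ 2 + c * x + 1) * (x ^ 2 + -c * x + 1) := by
  linear_combination x ^ 2 * hd

lemma palindromic_quartic_pos (hc : c ^ 2 < 4) (hd : c ^ 2 + d = 2) (x : ℝ) :
    0 < x ^ 4 + d * x ^ 2 + 1 := by
  rw [palindromic_quartic_eq_mul hd]
  exact mul_pos (quadratic_pos hc x) (quadratic_pos (by rwa [neg_sq]) x)

lemma intervalIntegrable_div_palindromic_quartic (hc : c ^ 2 < 4) (hd : c ^ 2 + d = 2)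
    (a b : ℝ) :
    IntervalIntegrable (fun x : ℝ => 2 * c * (1 - x ^ 2) / (x ^ 4 + d * x ^ 2 + 1))
      MeasureTheory.volume a b :=
  (Continuous.div (by fun_prop) (by fun_prop) fun x =>
    (palindromic_quartic_pos hc hd x).ne').intervalIntegrable a b

lemma hasDerivAt_log_quadratic (hc : c ^ 2 < 4) (x : ℝ) :
    HasDerivAt (fun y => log (y ^ 2 + c * y + 1)) ((2 * x + c) / (x ^ 2 + c * x + 1)) x := by
  have hq : HasDerivAt (fun y => y ^ 2 + c * y + 1) (2 * x + c) x := by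
    simpa using ((hasDerivAt_pow 2 x).add ((hasDerivAt_id x).const_mul c)).add_const 1
  exact hq.log (quadratic_pos hc x).ne'

lemma hasDerivAt_log_quadratic_sub_log_quadratic (hc : c ^ 2 < 4) (hd : c ^ 2 + d = 2)
    (x : ℝ) :
    HasDerivAt (fun y => log (y ^ 2 + c * y + 1) - log (y ^ 2 + -c * y + 1))
      (2 * c * (1 - x ^ 2) / (x ^ 4 + d * x ^ 2 + 1)) x := by
  have hc' : (-c) ^ 2 < 4 := by rwa [neg_sq]
  refine ((hasDerivAt_log_quadratic hc x).sub (hasDerivAt_log_quadratic hc' x)).congr_deriv ?_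
  rw [palindromic_quartic_eq_mul hd,
    div_sub_div _ _ (quadratic_pos hc x).ne' (quadratic_pos hc' x).ne']
  ring

theorem integral_div_palindromic_quartic (hc : c ^ 2 < 4) (hd : c ^ 2 + d = 2) :
    ∫ x in (0 : ℝ)..1, 2 * c * (1 - x ^ 2) / (x ^ 4 + d * x ^ 2 + 1) =
      log ((2 + c) / (2 - c)) := by
  rw [intervalIntegral.integral_eq_sub_of_hasDerivAt
    (fun x _ => hasDerivAt_log_quadratic_sub_log_quadratic hc hd x)
    (intervalIntegrable_div_palindromic_quartic hc hd 0 1),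
    log_div (by nlinarith) (by nlinarith)]
  norm_num
  ring_nf

end PalindromicQuartic

lemma sq_one_sub_pow_four_div_one_sub_pow_ten (x : ℝ) :
    (1 - x ^ 4) ^ 2 / (1 - x ^ 10) =
      (1 - x ^ 2) * (1 + x ^ 2) ^ 2 / (x ^ 8 + x ^ 6 + x ^ 4 + x ^ 2 + 1) := by
  rw [show (1 - x ^ 4) ^ 2 = (1 - x ^ 2) * ((1 - x ^ 2) * (1 + x ^ 2) ^ 2) by ring,
    show 1 - x ^ 10 = (1 - x ^ 2) * (x ^ 8 + x ^ 6 + x ^ 4 + x ^ 2 + 1) by ring]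
  by_cases h : 1 - x ^ 2 = 0
  · -- at `x = ±1` both sides vanish, the left one because `0 / 0 = 0`
    simp [h]
  · exact mul_div_mul_left _ _ h

section GoldenPair

variable {p q : ℝ}

lemma octic_eq_mul (hadd : p + q = 1) (hmul : p * q = -1) (x : ℝ) :
    x ^ 8 + x ^ 6 + x ^ 4 + x ^ 2 + 1 = (x ^ 4 + q * x ^ 2 + 1) * (x ^ 4 + p * x ^ 2 + 1) := by
  linear_combination (-(x ^ 6 + x ^ 2)) * hadd - x ^ 4 * hmul

lemma partial_fractions (hadd : p + q = 1) (hmul : p * q = -1) {x : ℝ}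
    (h₁ : x ^ 4 + q * x ^ 2 + 1 ≠ 0) (h₂ : x ^ 4 + p * x ^ 2 + 1 ≠ 0) :
    (1 - x ^ 2) * (1 + x ^ 2) ^ 2 / ((x ^ 4 + q * x ^ 2 + 1) * (x ^ 4 + p * x ^ 2 + 1)) =
      (2 + p) / 10 * (2 * p * (1 - x ^ 2) / (x ^ 4 + q * x ^ 2 + 1)) +
        (2 + q) / 10 * (2 * q * (1 - x ^ 2) / (x ^ 4 + p * x ^ 2 + 1)) := by
  have hp : p ^ 2 = p + 1 := by linear_combination p * hadd - hmul
  have hq : q ^ 2 = q + 1 := by linear_combination q * hadd - hmul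
  have key : (2 + p) * p * (x ^ 4 + p * x ^ 2 + 1) + (2 + q) * q * (x ^ 4 + q * x ^ 2 + 1) =
      5 * (1 + x ^ 2) ^ 2 := by
    linear_combination (x ^ 4 + (p + 3) * x ^ 2 + 1) * hp + (x ^ 4 + (q + 3) * x ^ 2 + 1) * hq +
      (3 * x ^ 4 + 4 * x ^ 2 + 3) * hadd
  rw [mul_div_assoc', mul_div_assoc', div_add_div _ _ h₁ h₂, div_left_inj' (mul_ne_zero h₁ h₂)]
  linear_combination (-(1 - x ^ 2) / 5) * key

lemma two_add_div_two_sub_of_sq_eq (hp : p ^ 2 = p + 1) :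
    (2 + p) / (2 - p) = (2 * p - 1) * p ^ 3 := by
  have h₁ : 2 + p = (2 * p - 1) * p := by linear_combination -2 * hp
  have h₂ : (2 - p) * p ^ 2 = 1 := by linear_combination (1 - p) * hp
  rw [div_eq_iff (left_ne_zero_of_mul_eq_one h₂)]
  linear_combination h₁ - (2 * p - 1) * p * h₂

end GoldenPair

namespace Real

lemma goldenRatio_sq_add_goldenConj : φ ^ 2 + ψ = 2 := by
  linear_combination goldenRatio_sq + goldenRatio_add_goldenConj

lemma goldenConj_sq_add_goldenRatio : ψ ^ 2 + φ = 2 := by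
  linear_combination goldenConj_sq + goldenRatio_add_goldenConj

lemma goldenRatio_sq_lt_four : φ ^ 2 < 4 := by
  nlinarith [goldenRatio_pos, goldenRatio_lt_two]

lemma goldenConj_sq_lt_four : ψ ^ 2 < 4 := by
  nlinarith [goldenConj_neg, neg_one_lt_goldenConj]

lemma goldenRatio_pow_three : φ ^ 3 = 2 + √5 := by
  linear_combination (φ + 1) * goldenRatio_sq

lemma log_two_add_goldenRatio_div_two_sub : log ((2 + φ) / (2 - φ)) = log √5 + 3 * log φ := by
  rw [two_add_div_two_sub_of_sq_eq goldenRatio_sq, show 2 * φ - 1 = √5 by ring,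
    log_mul (by positivity) (by positivity), log_pow]
  push_cast
  ring

lemma log_two_add_goldenConj_div_two_sub : log ((2 + ψ) / (2 - ψ)) = log √5 - 3 * log φ := by
  -- both factors of `(2 * ψ - 1) * ψ ^ 3` are negative: `log` only sees their absolute values
  rw [two_add_div_two_sub_of_sq_eq goldenConj_sq, show 2 * ψ - 1 = -√5 by ring,
    log_mul (neg_ne_zero.mpr (by positivity)) (pow_ne_zero 3 goldenConj_ne_zero),
    log_neg_eq_log, log_pow, ← neg_neg ψ, ← inv_goldenRatio, log_neg_eq_log, log_inv]
  push_cast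
  ring

end Real

/-- For `m = 4` (so `n = 10`), the constant `κ₄ = (n/2)·∫₀¹ (1-x^m)²/(1-x^n) dx`
equals `(5/4)·ln 5 + (√5/2)·ln(2+√5)`. -/
theorem kappa_four_eq :
    5 * ∫ x in (0:ℝ)..1, (1 - x ^ 4) ^ 2 / (1 - x ^ 10) =
      (5 / 4) * Real.log 5 + (Real.sqrt 5 / 2) * Real.log (2 + Real.sqrt 5) := by
  have hψ := palindromic_quartic_pos goldenRatio_sq_lt_four goldenRatio_sq_add_goldenConj
  have hφ := palindromic_quartic_pos goldenConj_sq_lt_four goldenConj_sq_add_goldenRatio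
  have hsplit (x : ℝ) : (1 - x ^ 4) ^ 2 / (1 - x ^ 10) =
      (2 + φ) / 10 * (2 * φ * (1 - x ^ 2) / (x ^ 4 + ψ * x ^ 2 + 1)) +
        (2 + ψ) / 10 * (2 * ψ * (1 - x ^ 2) / (x ^ 4 + φ * x ^ 2 + 1)) := by
    rw [sq_one_sub_pow_four_div_one_sub_pow_ten,
      octic_eq_mul goldenRatio_add_goldenConj goldenRatio_mul_goldenConj]
    exact partial_fractions goldenRatio_add_goldenConj goldenRatio_mul_goldenConj
      (hψ x).ne' (hφ x).ne'
  simp only [hsplit]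
  rw [intervalIntegral.integral_add, intervalIntegral.integral_const_mul,
    intervalIntegral.integral_const_mul,
    integral_div_palindromic_quartic goldenRatio_sq_lt_four goldenRatio_sq_add_goldenConj,
    integral_div_palindromic_quartic goldenConj_sq_lt_four goldenConj_sq_add_goldenRatio,
    log_two_add_goldenRatio_div_two_sub, log_two_add_goldenConj_div_two_sub,
    ← goldenRatio_pow_three, log_pow, log_sqrt (by norm_num)]
  · push_cast
    ring
  · exact (intervalIntegrable_div_palindromic_quartic goldenRatio_sq_lt_four
      goldenRatio_sq_add_goldenConj 0 1).const_mul _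
  · exact (intervalIntegrable_div_palindromic_quartic goldenConj_sq_lt_four
      goldenConj_sq_add_goldenRatio 0 1).const_mul _
end

section
/- Let m ≥ 1 be an integer, n = 2m+2, p_j = e^{2πij/n}, and λ ∈ ℂ with λ ≠ 0. For 0 ≤ j ≤ n−1 define the 2×2 complex matrices A_j(λ) with entries (A_j)₁₁ = (−1)^j·λ, (A_j)₁₂ = λ^{−1}·e^{2πij/n}·(λ²−1)/2, (A_j)₂₁ = λ·(−2)·e^{−2πij/n}, (A_j)₂₂ = −(−1)^j·λ. Then for every z ∈ ℂ with z^n ≠ 1, ∑_{j=0}^{n−1} A_j(λ)/(z − p_j) equals (n/(2(z^n − 1))) times the matrix [[2λz^m, λ − λ^{−1}], [−4λz^{2m}, −2λz^m]]. -/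
/-!
Put `ζ = e^{2πi/n}` and `w = ζ^j`. Since `(-1)^j = w^(m+1)` and `e^{-2πij/n} = w^(2m+1)`, the
entries of `A_j` are constant multiples of `w^(m+1)`, `w` and `w^(2m+1)`, and the theorem reduces to
the partial-fraction sums `∑_j w^k / (z - w) = n z^(k-1) / (z^n - 1)` for `1 ≤ k ≤ n`. These come
from `z^n - 1 = (z - w) ∑_i z^i w^(n-1-i)` together with `∑_j ζ^(ja) = 0` for `n ∤ a`: only the
coefficient of `z^(k-1)` survives the sum over `j`.
-/

open Complex Finset Matrix

theorem pow_div_sub_eq_sum_div {K : Type*} [Field K] {w z : K} {n : ℕ} (hw : w ^ n = 1)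
    (hz : z ^ n ≠ 1) (k : ℕ) :
    w ^ k / (z - w) = (∑ i ∈ range n, w ^ (k + (n - 1 - i)) * z ^ i) / (z ^ n - 1) := by
  have hzw : z - w ≠ 0 := sub_ne_zero.mpr fun h => hz (h ▸ hw)
  have hfactor : z ^ n - 1 = (∑ i ∈ range n, z ^ i * w ^ (n - 1 - i)) * (z - w) := by
    rw [geom_sum₂_mul, hw]
  rw [div_eq_div_iff hzw (sub_ne_zero.mpr hz), hfactor, ← mul_assoc, mul_sum, sum_mul, sum_mul]
  refine sum_congr rfl fun i _ => ?_
  ring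

namespace IsPrimitiveRoot

variable {K : Type*} [Field K] {ζ : K} {n : ℕ}

theorem sum_pow_pow_of_not_dvd (hζ : IsPrimitiveRoot ζ n) {a : ℕ} (ha : ¬n ∣ a) :
    ∑ j ∈ range n, (ζ ^ j) ^ a = 0 := by
  have hne : ζ ^ a ≠ 1 := mt (hζ.pow_eq_one_iff_dvd a).mp ha
  simp_rw [pow_right_comm ζ _ a]
  rw [geom_sum_eq hne, pow_right_comm, hζ.pow_eq_one, one_pow, sub_self, zero_div]

theorem sum_pow_pow_self (hζ : IsPrimitiveRoot ζ n) : ∑ j ∈ range n, (ζ ^ j) ^ n = n := by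
  simp [pow_right_comm ζ _ n, hζ.pow_eq_one]

theorem sum_pow_div_sub (hζ : IsPrimitiveRoot ζ n) {z : K} (hz : z ^ n ≠ 1) {k : ℕ}
    (hk : 1 ≤ k) (hkn : k ≤ n) :
    ∑ j ∈ range n, (ζ ^ j) ^ k / (z - ζ ^ j) = n * z ^ (k - 1) / (z ^ n - 1) := by
  have hroot (j : ℕ) : (ζ ^ j) ^ n = 1 := by rw [pow_right_comm, hζ.pow_eq_one, one_pow]
  simp_rw [pow_div_sub_eq_sum_div (hroot _) hz k]
  rw [← sum_div, sum_comm]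
  congr 1
  simp_rw [← sum_mul]
  rw [sum_eq_single_of_mem (k - 1) (mem_range.mpr (by omega))]
  · rw [show k + (n - 1 - (k - 1)) = n by omega, hζ.sum_pow_pow_self]
  · intro i hi hik
    have hi := mem_range.mp hi
    -- `k + (n - 1 - i)` lies strictly between `0` and `2 n`, so it is a multiple of `n` only if
    -- it equals `n`, i.e. `i = k - 1`.
    have hndvd : ¬n ∣ k + (n - 1 - i) := fun hdvd =>
      hik (by have := Nat.eq_of_dvd_of_lt_two_mul (by omega) hdvd (by omega); omega)
    rw [hζ.sum_pow_pow_of_not_dvd hndvd, zero_mul]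

end IsPrimitiveRoot

theorem sum_residue_matrices_general (m : ℕ) (lam z : ℂ)
    (hz : z ^ (2 * m + 2) ≠ 1) :
    ∑ j ∈ Finset.range (2 * m + 2),
        (z - Complex.exp (2 * Real.pi * Complex.I * (j : ℂ) / (2 * (m : ℂ) + 2)))⁻¹ •
          (!![(-1 : ℂ) ^ j * lam,
              lam⁻¹ * Complex.exp (2 * Real.pi * Complex.I * (j : ℂ) / (2 * (m : ℂ) + 2)) *
                ((lam ^ 2 - 1) / 2);
              lam * (-2) * Complex.exp (-(2 * Real.pi * Complex.I * (j : ℂ)) / (2 * (m : ℂ) + 2)),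
              -((-1 : ℂ) ^ j * lam)] : Matrix (Fin 2) (Fin 2) ℂ) =
      ((2 * (m : ℂ) + 2) / (2 * (z ^ (2 * m + 2) - 1))) •
        (!![2 * lam * z ^ m, lam - lam⁻¹;
            -4 * lam * z ^ (2 * m), -2 * lam * z ^ m] : Matrix (Fin 2) (Fin 2) ℂ) := by
  set n := 2 * m + 2 with hn
  have hcast : (2 * (m : ℂ) + 2) = n := by simp only [hn]; push_cast; ring
  set ζ := exp (2 * Real.pi * I / n)
  have hζ : IsPrimitiveRoot ζ n := isPrimitiveRoot_exp n (by omega)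
  have hp (j : ℕ) : exp (2 * Real.pi * I * j / (2 * (m : ℂ) + 2)) = ζ ^ j := by
    rw [← exp_nat_mul, hcast]; ring_nf
  have hp_neg (j : ℕ) :
      exp (-(2 * Real.pi * I * j) / (2 * (m : ℂ) + 2)) = (ζ ^ j) ^ (2 * m + 1) := by
    rw [neg_div, Complex.exp_neg, hp]
    refine inv_eq_of_mul_eq_one_left ?_
    rw [← pow_succ, pow_right_comm, hζ.pow_eq_one, one_pow]
  have hsign (j : ℕ) : (-1 : ℂ) ^ j = (ζ ^ j) ^ (m + 1) := by
    have hn2 : n = (m + 1) * 2 := by omega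
    have h2 : IsPrimitiveRoot (ζ ^ (m + 1)) 2 := by
      have := hζ.pow_of_dvd m.succ_ne_zero (Dvd.intro 2 hn2.symm)
      rwa [hn2, Nat.mul_div_cancel_left _ m.succ_pos] at this
    rw [pow_right_comm, h2.eq_neg_one_of_two_right]
  simp_rw [hp, hp_neg, hsign]
  have hterm (w : ℂ) :
      (z - w)⁻¹ • !![w ^ (m + 1) * lam, lam⁻¹ * w * ((lam ^ 2 - 1) / 2);
          lam * (-2) * w ^ (2 * m + 1), -(w ^ (m + 1) * lam)] =
        (w ^ (m + 1) / (z - w)) • !![lam, 0; 0, -lam] +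
        (w ^ 1 / (z - w)) • !![0, lam⁻¹ * ((lam ^ 2 - 1) / 2); 0, 0] +
        (w ^ (2 * m + 1) / (z - w)) • !![0, 0; -2 * lam, 0] := by
    ext a b
    fin_cases a <;> fin_cases b <;> simp <;> ring
  rw [sum_congr rfl fun j _ => hterm (ζ ^ j), sum_add_distrib, sum_add_distrib, ← sum_smul,
    ← sum_smul, ← sum_smul, hζ.sum_pow_div_sub hz (k := m + 1) (by omega) (by omega),
    hζ.sum_pow_div_sub hz le_rfl (by omega),
    hζ.sum_pow_div_sub hz (k := 2 * m + 1) (by omega) (by omega)]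
  ext a b
  fin_cases a <;> fin_cases b <;> (simp [hcast]; field_simp)
  ring

/-- With `n = 2m+2`, `p j = e^{2πij/n}`, and the residue matrices
`A j = [[(-1)^j λ, λ⁻¹ e^{2πij/n}(λ²-1)/2], [-2λ e^{-2πij/n}, -(-1)^j λ]]`,
one has `∑_{j=0}^{n-1} A j/(z - p j)
  = (n/(2(z^n - 1))) · [[2λz^m, λ-λ⁻¹], [-4λz^{2m}, -2λz^m]]` for `z^n ≠ 1`. -/
theorem sum_residue_matrices (m : ℕ) (hm : 1 ≤ m) (lam z : ℂ) (hlam : lam ≠ 0)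
    (hz : z ^ (2 * m + 2) ≠ 1) :
    ∑ j ∈ Finset.range (2 * m + 2),
        (z - Complex.exp (2 * Real.pi * Complex.I * (j : ℂ) / (2 * (m : ℂ) + 2)))⁻¹ •
          (!![(-1 : ℂ) ^ j * lam,
              lam⁻¹ * Complex.exp (2 * Real.pi * Complex.I * (j : ℂ) / (2 * (m : ℂ) + 2)) *
                ((lam ^ 2 - 1) / 2);
              lam * (-2) * Complex.exp (-(2 * Real.pi * Complex.I * (j : ℂ)) / (2 * (m : ℂ) + 2)),
              -((-1 : ℂ) ^ j * lam)] : Matrix (Fin 2) (Fin 2) ℂ) =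
      ((2 * (m : ℂ) + 2) / (2 * (z ^ (2 * m + 2) - 1))) •
        (!![2 * lam * z ^ m, lam - lam⁻¹;
            -4 * lam * z ^ (2 * m), -2 * lam * z ^ m] : Matrix (Fin 2) (Fin 2) ℂ) :=
  sum_residue_matrices_general m lam z hz
end

section
/- Let n ≥ 1 and k, ℓ be nonnegative integers. Let D ⊂ ℂ be an open disk containing 0 and 1 and containing no n-th root of unity other than 1, and let γ : [0,1] → D \ {1} be a piecewise C¹ loop with γ(0) = γ(1) = 0 whose winding number around 1 equals 1, i.e. (1/(2πi))·∫₀¹ γ′(s)/(γ(s) − 1) ds = 1. For s ∈ [0,1] define I_k(s) = ∫₀^s γ(u)^k·γ′(u)/(γ(u)^n − 1) du. Then ∫₀¹ ( I_k(s)·γ(s)^ℓ − I_ℓ(s)·γ(s)^k )·γ′(s)/(γ(s)^n − 1) ds = (4πi/n)·J_{k,ℓ}. -/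
open Complex MeasureTheory

/-!
On the disk, `z ^ m / (z ^ n - 1) = 1 / (n (z - 1)) + h_m z` with `h_m` holomorphic, so
`I_m(s) = W(s) / n + H_m(γ s) - H_m(0)`, where `W(s) = ∫₀ˢ γ' / (γ - 1)` and `H_m` is a primitive
of `h_m`. Substituting, the integrand becomes an exact term, which integrates to zero around the
loop, plus `(G(γ) - G(0)) γ' / (n (γ - 1))` and `W (h_ℓ - h_k)(γ) γ' / n`, where `G = H_k - H_ℓ`.
By Cauchy's formula the first of these contributes `2πi (G(1) - G(0)) / n`; integrating the second
by parts (Fubini) turns it into the first. Finally `G(1) - G(0) = ∫₀¹ (h_k - h_ℓ) = J_{k,ℓ}`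
along the segment `[0, 1]`.
-/

open Metric Set intervalIntegral

/-- `z ^ m / (z ^ n - 1) - 1 / (n (z - 1))`, continued across its removable singularity at `1`. -/
noncomputable def regularPart (n m : ℕ) : ℂ → ℂ :=
  dslope (fun z => z ^ m / ∑ i ∈ Finset.range n, z ^ i - (n : ℂ)⁻¹) 1

theorem geom_sum_ne_zero_of_pow_ne_one {n : ℕ} {z : ℂ} (hz : z ^ n ≠ 1) :
    ∑ i ∈ Finset.range n, z ^ i ≠ 0 := fun h => by
  have := geom_sum_mul z n
  rw [h, zero_mul] at this
  exact hz (sub_eq_zero.1 this.symm)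

theorem pow_div_pow_sub_one_eq_add_regularPart {n : ℕ} (m : ℕ) {z : ℂ} (hz : z ≠ 1)
    (hzn : z ^ n ≠ 1) : z ^ m / (z ^ n - 1) = (n : ℂ)⁻¹ / (z - 1) + regularPart n m z := by
  have hn : (n : ℂ) ≠ 0 := by rintro h; simp_all
  have hP := geom_sum_ne_zero_of_pow_ne_one hzn
  have hz' : z - 1 ≠ 0 := sub_ne_zero.2 hz
  rw [regularPart, dslope_of_ne _ hz, slope_def_field, ← geom_sum_mul z n]
  simp only [one_pow, Finset.sum_const, Finset.card_range, nsmul_eq_mul, mul_one]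
  field_simp
  ring

theorem regularPart_sub_regularPart {n : ℕ} (k l : ℕ) {z : ℂ} (hz : z ≠ 1) (hzn : z ^ n ≠ 1) :
    regularPart n k z - regularPart n l z = (z ^ k - z ^ l) / (z ^ n - 1) := by
  rw [sub_div, pow_div_pow_sub_one_eq_add_regularPart k hz hzn,
    pow_div_pow_sub_one_eq_add_regularPart l hz hzn]
  ring

theorem differentiableOn_regularPart {n : ℕ} (hn : n ≠ 0) (m : ℕ) {U : Set ℂ} (hU : IsOpen U)
    (h1 : 1 ∈ U) (hroots : ∀ w ∈ U, w ^ n = 1 → w = 1) :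
    DifferentiableOn ℂ (regularPart n m) U := by
  refine (Complex.differentiableOn_dslope (hU.mem_nhds h1)).2 ?_
  refine (((differentiableOn_pow m).div (by fun_prop) fun w hw hP => ?_)).sub_const _
  by_cases hw1 : w = 1
  · subst hw1
    simp [hn] at hP
  · exact geom_sum_ne_zero_of_pow_ne_one (fun h => hw1 (hroots w hw h)) hP

theorem intervalIntegral.integral_primitive_mul_eq {𝕜 : Type*} [RCLike 𝕜] {ψ δ : ℝ → 𝕜}
    {a b : ℝ} (hab : a ≤ b) (hψ : IntervalIntegrable ψ volume a b)
    (hδ : IntervalIntegrable δ volume a b) :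
    ∫ s in a..b, (∫ u in a..s, ψ u) * δ s = ∫ u in a..b, ψ u * ∫ s in u..b, δ s := by
  rw [intervalIntegrable_iff_integrableOn_Ioc_of_le hab] at hψ hδ
  rw [integral_of_le hab, integral_of_le hab]
  have hinner : ∀ s ∈ Ioc a b, (∫ u in a..s, ψ u) * δ s
      = ∫ u in Ioc a b, (Iic s).indicator ψ u * δ s := fun s hs => by
    rw [MeasureTheory.integral_mul_const, setIntegral_indicator measurableSet_Iic, Ioc_inter_Iic,
      min_eq_right hs.2, integral_of_le hs.1.le]
  have hprod : Integrable (Function.uncurry fun s u => (Iic s).indicator ψ u * δ s)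
      ((volume.restrict (Ioc a b)).prod (volume.restrict (Ioc a b))) := by
    refine ((hδ.mul_prod hψ).indicator (measurableSet_le measurable_snd measurable_fst)).congr
      (Filter.Eventually.of_forall fun p => ?_)
    simp only [Function.uncurry, indicator_apply, mem_Iic, mem_ofPred_eq]
    split_ifs <;> simp [mul_comm]
  rw [setIntegral_congr_fun measurableSet_Ioc hinner, integral_integral_swap hprod]
  refine setIntegral_congr_fun measurableSet_Ioc fun u hu => ?_
  have hswap : ∀ s, (Iic s).indicator ψ u * δ s = (Ici u).indicator (fun s => ψ u * δ s) s :=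
    fun s => by by_cases h : u ≤ s <;> simp [h]
  simp only [hswap]
  have hset : Ioc a b ∩ Ici u = Icc u b := Set.ext fun x =>
    ⟨fun ⟨⟨_, hxb⟩, hux⟩ => ⟨hux, hxb⟩, fun ⟨hux, hxb⟩ => ⟨⟨hu.1.trans_le hux, hxb⟩, hux⟩⟩
  rw [setIntegral_indicator measurableSet_Ici, MeasureTheory.integral_const_mul, hset,
    integral_Icc_eq_integral_Ioc, integral_of_le hu.2]

structure IsIntegrationPath (U : Set ℂ) (γ γ' : ℝ → ℂ) : Prop where
  mapsTo : MapsTo γ (Icc 0 1) U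
  continuousOn : ContinuousOn γ (Icc 0 1)
  hasDerivAt : ∃ S : Set ℝ, S.Countable ∧ ∀ s ∈ Icc (0 : ℝ) 1 \ S, HasDerivAt γ (γ' s) s
  intervalIntegrable : IntervalIntegrable γ' volume 0 1

theorem isIntegrationPath_ofReal {U : Set ℂ} (hU : Convex ℝ U) (h0 : (0 : ℂ) ∈ U)
    (h1 : (1 : ℂ) ∈ U) : IsIntegrationPath U (fun t : ℝ => (t : ℂ)) fun _ => 1 where
  mapsTo t ht := by
    simpa [Complex.real_smul] using hU h0 h1 (sub_nonneg.2 ht.2) ht.1 (sub_add_cancel 1 t)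
  continuousOn := continuous_ofReal.continuousOn
  hasDerivAt := ⟨∅, countable_empty, fun t _ => (hasDerivAt_id t).ofReal_comp⟩
  intervalIntegrable := intervalIntegrable_const

namespace IsIntegrationPath

variable {U V : Set ℂ} {γ γ' : ℝ → ℂ}

theorem mono (hγ : IsIntegrationPath U γ γ') (hUV : U ⊆ V) : IsIntegrationPath V γ γ' :=
  ⟨hγ.mapsTo.mono_right hUV, hγ.continuousOn, hγ.hasDerivAt, hγ.intervalIntegrable⟩

theorem mapsTo_uIcc (hγ : IsIntegrationPath U γ γ') {b : ℝ} (hb : b ∈ Icc (0 : ℝ) 1) :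
    MapsTo γ (uIcc 0 b) U :=
  hγ.mapsTo.mono_left (uIcc_subset_Icc (left_mem_Icc.2 zero_le_one) hb)

theorem continuousOn_comp (hγ : IsIntegrationPath U γ γ') {f : ℂ → ℂ} (hf : ContinuousOn f U) :
    ContinuousOn (fun s => f (γ s)) (Icc 0 1) :=
  hf.comp hγ.continuousOn hγ.mapsTo

theorem intervalIntegrable_comp_mul (hγ : IsIntegrationPath U γ γ') {f : ℂ → ℂ}
    (hf : ContinuousOn f U) {b : ℝ} (hb : b ∈ Icc (0 : ℝ) 1) :
    IntervalIntegrable (fun s => f (γ s) * γ' s) volume 0 b := by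
  have hsub : uIcc 0 b ⊆ Icc (0 : ℝ) 1 := uIcc_subset_Icc (left_mem_Icc.2 zero_le_one) hb
  refine (hγ.intervalIntegrable.mono_set ?_).continuousOn_mul
    ((hγ.continuousOn_comp hf).mono hsub)
  rwa [uIcc_of_le zero_le_one]

theorem intervalIntegrable_div_sub (hγ : IsIntegrationPath U γ γ') {w : ℂ} (hw : w ∉ U)
    {b : ℝ} (hb : b ∈ Icc (0 : ℝ) 1) :
    IntervalIntegrable (fun s => γ' s / (γ s - w)) volume 0 b := by
  have hf : ContinuousOn (fun z => (z - w)⁻¹) U :=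
    (continuousOn_id.sub continuousOn_const).inv₀ fun z hz =>
      sub_ne_zero.2 (ne_of_mem_of_not_mem hz hw)
  simpa only [div_eq_mul_inv, mul_comm] using hγ.intervalIntegrable_comp_mul hf hb

theorem integral_comp_mul_eq_sub (hγ : IsIntegrationPath U γ γ') {φ Φ : ℂ → ℂ}
    (hΦ : ∀ z ∈ U, HasDerivAt Φ (φ z) z) (hφ : ContinuousOn φ U) {b : ℝ}
    (hb : b ∈ Icc (0 : ℝ) 1) :
    ∫ s in 0..b, φ (γ s) * γ' s = Φ (γ b) - Φ (γ 0) := by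
  obtain ⟨S, hS, hderiv⟩ := hγ.hasDerivAt
  have hsub : Icc 0 b ⊆ Icc (0 : ℝ) 1 := Icc_subset_Icc le_rfl hb.2
  have hΦc : ContinuousOn Φ U := fun z hz => (hΦ z hz).continuousAt.continuousWithinAt
  refine integral_eq_of_hasDerivAt_off_countable_of_le _ _ hb.1 hS
    ((hΦc.comp hγ.continuousOn hγ.mapsTo).mono hsub) (fun s hs => ?_)
    (hγ.intervalIntegrable_comp_mul hφ hb)
  have hs1 : s ∈ Icc (0 : ℝ) 1 := hsub (Ioo_subset_Icc_self hs.1)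
  exact (hΦ (γ s) (hγ.mapsTo hs1)).comp s (hderiv s ⟨hs1, hs.2⟩)

theorem intervalIntegrable_comp_sub_mul_div_sub (hγ : IsIntegrationPath U γ γ') {w : ℂ}
    (hw : w ∉ U) {Φ : ℂ → ℂ} (hΦ : ContinuousOn Φ U) :
    IntervalIntegrable (fun s => (Φ (γ s) - Φ (γ 0)) * (γ' s / (γ s - w))) volume 0 1 := by
  refine (hγ.intervalIntegrable_div_sub hw (right_mem_Icc.2 zero_le_one)).continuousOn_mul ?_
  rw [uIcc_of_le zero_le_one]
  exact hγ.continuousOn_comp (hΦ.sub continuousOn_const)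

theorem intervalIntegrable_primitive_div_sub_mul (hγ : IsIntegrationPath U γ γ') {w : ℂ}
    (hw : w ∉ U) {φ : ℂ → ℂ} (hφ : ContinuousOn φ U) :
    IntervalIntegrable (fun s => (∫ u in 0..s, γ' u / (γ u - w)) * (φ (γ s) * γ' s))
      volume 0 1 :=
  (hγ.intervalIntegrable_comp_mul hφ (right_mem_Icc.2 zero_le_one)).continuousOn_mul
    (continuousOn_primitive_interval'
      (hγ.intervalIntegrable_div_sub hw (right_mem_Icc.2 zero_le_one)) left_mem_uIcc)

theorem integral_primitive_mul_comp_mul (hγ : IsIntegrationPath U γ γ') {ψ : ℝ → ℂ}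
    (hψ : IntervalIntegrable ψ volume 0 1) {φ Φ : ℂ → ℂ} (hΦ : ∀ z ∈ U, HasDerivAt Φ (φ z) z)
    (hφ : ContinuousOn φ U) :
    ∫ s in 0..1, (∫ u in 0..s, ψ u) * (φ (γ s) * γ' s)
      = ∫ u in 0..1, ψ u * (Φ (γ 1) - Φ (γ u)) := by
  have h1 : (1 : ℝ) ∈ Icc 0 1 := right_mem_Icc.2 zero_le_one
  rw [integral_primitive_mul_eq zero_le_one hψ (hγ.intervalIntegrable_comp_mul hφ h1)]
  refine integral_congr fun u hu => ?_
  rw [uIcc_of_le zero_le_one] at hu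
  rw [← integral_interval_sub_left (hγ.intervalIntegrable_comp_mul hφ h1)
    (hγ.intervalIntegrable_comp_mul hφ hu), hγ.integral_comp_mul_eq_sub hΦ hφ h1,
    hγ.integral_comp_mul_eq_sub hΦ hφ hu, sub_sub_sub_cancel_right]

theorem integral_comp_mul_eq_of_eq_div_add (hγ : IsIntegrationPath U γ γ') {w : ℂ} (hw : w ∉ U)
    {f h H : ℂ → ℂ} (a : ℂ) (hf : ∀ z ∈ U, f z = a / (z - w) + h z)
    (hH : ∀ z ∈ U, HasDerivAt H (h z) z) (hh : ContinuousOn h U) {b : ℝ}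
    (hb : b ∈ Icc (0 : ℝ) 1) :
    ∫ s in 0..b, f (γ s) * γ' s = a * (∫ s in 0..b, γ' s / (γ s - w)) + (H (γ b) - H (γ 0)) := by
  have hsplit : EqOn (fun s => f (γ s) * γ' s)
      (fun s => a * (γ' s / (γ s - w)) + h (γ s) * γ' s) (uIcc 0 b) := fun s hs => by
    dsimp only
    rw [hf _ (hγ.mapsTo_uIcc hb hs)]
    ring
  rw [integral_congr hsplit, integral_add ((hγ.intervalIntegrable_div_sub hw hb).const_mul a)
    (hγ.intervalIntegrable_comp_mul hh hb), intervalIntegral.integral_const_mul,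
    hγ.integral_comp_mul_eq_sub hH hh hb]

variable {c w : ℂ} {R : ℝ}

theorem integral_comp_mul_eq_zero (hγ : IsIntegrationPath (ball c R) γ γ') (hloop : γ 0 = γ 1)
    {f : ℂ → ℂ} (hf : DifferentiableOn ℂ f (ball c R)) : ∫ s in 0..1, f (γ s) * γ' s = 0 := by
  obtain ⟨F, hF⟩ := hf.isExactOn_ball
  rw [hγ.integral_comp_mul_eq_sub hF hf.continuousOn (right_mem_Icc.2 zero_le_one), hloop,
    sub_self]

theorem integral_comp_mul_div_sub_eq (hγ : IsIntegrationPath (ball c R \ {w}) γ γ')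
    (hw : w ∈ ball c R) (hloop : γ 0 = γ 1) {f : ℂ → ℂ} (hf : DifferentiableOn ℂ f (ball c R)) :
    ∫ s in 0..1, f (γ s) * (γ' s / (γ s - w)) = f w * ∫ s in 0..1, γ' s / (γ s - w) := by
  have h1 : (1 : ℝ) ∈ Icc 0 1 := right_mem_Icc.2 zero_le_one
  have hw' : w ∉ ball c R \ {w} := fun h => h.2 rfl
  have hslope : DifferentiableOn ℂ (dslope f w) (ball c R) :=
    (Complex.differentiableOn_dslope (isOpen_ball.mem_nhds hw)).2 hf
  have hsplit : EqOn (fun s => f (γ s) * (γ' s / (γ s - w)))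
      (fun s => dslope f w (γ s) * γ' s + f w * (γ' s / (γ s - w))) (uIcc 0 1) := fun s hs => by
    have hγs : γ s ≠ w := (hγ.mapsTo_uIcc h1 hs).2
    have : γ s - w ≠ 0 := sub_ne_zero.2 hγs
    dsimp only
    rw [dslope_of_ne _ hγs, slope_def_field]
    field_simp
    ring
  rw [integral_congr hsplit, integral_add
    (hγ.intervalIntegrable_comp_mul (hslope.continuousOn.mono sdiff_subset) h1)
    ((hγ.intervalIntegrable_div_sub hw' h1).const_mul _), intervalIntegral.integral_const_mul,
    (hγ.mono sdiff_subset).integral_comp_mul_eq_zero hloop hslope, zero_add]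

theorem integral_comp_sub_mul_div_sub_sub_primitive_mul
    (hγ : IsIntegrationPath (ball c R \ {w}) γ γ') (hw : w ∈ ball c R) (hloop : γ 0 = γ 1)
    {φ Φ : ℂ → ℂ} (hΦ : ∀ z ∈ ball c R, HasDerivAt Φ (φ z) z) (hφ : ContinuousOn φ (ball c R)) :
    ∫ s in 0..1, ((Φ (γ s) - Φ (γ 0)) * (γ' s / (γ s - w))
        - (∫ u in 0..s, γ' u / (γ u - w)) * (φ (γ s) * γ' s))
      = 2 * (Φ w - Φ (γ 0)) * ∫ s in 0..1, γ' s / (γ s - w) := by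
  have hw' : w ∉ ball c R \ {w} := fun h => h.2 rfl
  have hΦd : DifferentiableOn ℂ Φ (ball c R) := fun z hz =>
    (hΦ z hz).differentiableAt.differentiableWithinAt
  have hφ' := hφ.mono (sdiff_subset (s := ball c R) (t := {w}))
  have hA := hγ.integral_comp_mul_div_sub_eq hw hloop (hΦd.sub_const (Φ (γ 0)))
  have hB : ∫ s in 0..1, (∫ u in 0..s, γ' u / (γ u - w)) * (φ (γ s) * γ' s)
      = -∫ s in 0..1, (Φ (γ s) - Φ (γ 0)) * (γ' s / (γ s - w)) := by
    rw [hγ.integral_primitive_mul_comp_mul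
      (hγ.intervalIntegrable_div_sub hw' (right_mem_Icc.2 zero_le_one))
      (fun z hz => hΦ z hz.1) hφ', ← intervalIntegral.integral_neg, ← hloop]
    refine integral_congr fun s _ => ?_
    ring
  rw [integral_sub (hγ.intervalIntegrable_comp_sub_mul_div_sub hw'
      (hΦd.continuousOn.mono sdiff_subset)) (hγ.intervalIntegrable_primitive_div_sub_mul hw' hφ'),
    hB, sub_neg_eq_add, hA]
  ring

theorem integral_primitive_mul_sub_primitive_mul (hγ : IsIntegrationPath (ball c R \ {w}) γ γ')
    (hw : w ∈ ball c R) (hloop : γ 0 = γ 1) {f g hf hg Hf Hg : ℂ → ℂ} (a : ℂ)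
    (hfa : ∀ z ∈ ball c R \ {w}, f z = a / (z - w) + hf z)
    (hga : ∀ z ∈ ball c R \ {w}, g z = a / (z - w) + hg z)
    (hhf : DifferentiableOn ℂ hf (ball c R)) (hhg : DifferentiableOn ℂ hg (ball c R))
    (hHf : ∀ z ∈ ball c R, HasDerivAt Hf (hf z) z)
    (hHg : ∀ z ∈ ball c R, HasDerivAt Hg (hg z) z) :
    ∫ s in 0..1, ((∫ u in 0..s, f (γ u) * γ' u) * g (γ s)
        - (∫ u in 0..s, g (γ u) * γ' u) * f (γ s)) * γ' s
      = 2 * a * (∫ s in 0..1, γ' s / (γ s - w)) * (Hf w - Hg w - (Hf (γ 0) - Hg (γ 0))) := by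
  have h1 : (1 : ℝ) ∈ Icc 0 1 := right_mem_Icc.2 zero_le_one
  have hw' : w ∉ ball c R \ {w} := fun h => h.2 rfl
  have hHfd : DifferentiableOn ℂ Hf (ball c R) := fun z hz =>
    (hHf z hz).differentiableAt.differentiableWithinAt
  have hHgd : DifferentiableOn ℂ Hg (ball c R) := fun z hz =>
    (hHg z hz).differentiableAt.differentiableWithinAt
  set Φ := fun z => Hf z - Hg z
  set T := fun z => (Hf z - Hf (γ 0)) * hg z - (Hg z - Hg (γ 0)) * hf z
  have hTd : DifferentiableOn ℂ T (ball c R) :=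
    ((hHfd.sub_const _).mul hhg).sub ((hHgd.sub_const _).mul hhf)
  have hpt : EqOn
      (fun s => ((∫ u in 0..s, f (γ u) * γ' u) * g (γ s)
        - (∫ u in 0..s, g (γ u) * γ' u) * f (γ s)) * γ' s)
      (fun s => a * ((Φ (γ s) - Φ (γ 0)) * (γ' s / (γ s - w))
        - (∫ u in 0..s, γ' u / (γ u - w)) * ((hf (γ s) - hg (γ s)) * γ' s))
        + T (γ s) * γ' s) (uIcc 0 1) := fun s hs => by
    rw [uIcc_of_le zero_le_one] at hs
    have hγs := hγ.mapsTo hs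
    dsimp only
    rw [hγ.integral_comp_mul_eq_of_eq_div_add hw' a hfa (fun z hz => hHf z hz.1)
        (hhf.continuousOn.mono sdiff_subset) hs,
      hγ.integral_comp_mul_eq_of_eq_div_add hw' a hga (fun z hz => hHg z hz.1)
        (hhg.continuousOn.mono sdiff_subset) hs, hfa _ hγs, hga _ hγs]
    ring
  have hφ : ContinuousOn (fun z => hf z - hg z) (ball c R) :=
    hhf.continuousOn.sub hhg.continuousOn
  have hI := (hγ.intervalIntegrable_comp_sub_mul_div_sub hw' (Φ := Φ)
    ((hHfd.sub hHgd).continuousOn.mono sdiff_subset)).sub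
    (hγ.intervalIntegrable_primitive_div_sub_mul hw' (hφ.mono sdiff_subset))
  rw [integral_congr hpt, intervalIntegral.integral_add (hI.const_mul a)
    (hγ.intervalIntegrable_comp_mul (hTd.continuousOn.mono sdiff_subset) h1),
    intervalIntegral.integral_const_mul,
    hγ.integral_comp_sub_mul_div_sub_sub_primitive_mul hw hloop (Φ := Φ)
      (fun z hz => (hHf z hz).sub (hHg z hz)) hφ,
    (hγ.mono sdiff_subset).integral_comp_mul_eq_zero hloop hTd]
  ring

end IsIntegrationPath

theorem integral_regularPart_sub_regularPart {n : ℕ} (hn : n ≠ 0) (k l : ℕ) :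
    ∫ t in (0 : ℝ)..1, (regularPart n k t - regularPart n l t)
      = ((∫ x in (0 : ℝ)..1, (x ^ k - x ^ l) / (x ^ n - 1) : ℝ) : ℂ) := by
  rw [← intervalIntegral.integral_ofReal]
  refine integral_congr_ae ?_
  filter_upwards [Measure.ae_ne volume 1] with x hx1 hx
  rw [uIoc_of_le zero_le_one] at hx
  have hxn : x ^ n < 1 := pow_lt_one₀ hx.1.le (lt_of_le_of_ne hx.2 hx1) hn
  rw [regularPart_sub_regularPart k l (by exact_mod_cast hx1) (by exact_mod_cast hxn.ne)]
  push_cast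
  rfl

theorem sub_eq_integral_pow_sub_pow_div_pow_sub_one {n : ℕ} (hn : n ≠ 0) (k l : ℕ) {U : Set ℂ}
    (hU : Convex ℝ U) (h0 : (0 : ℂ) ∈ U) (h1 : (1 : ℂ) ∈ U) {Φ : ℂ → ℂ}
    (hΦ : ∀ z ∈ U, HasDerivAt Φ (regularPart n k z - regularPart n l z) z)
    (hcont : ContinuousOn (fun z => regularPart n k z - regularPart n l z) U) :
    Φ 1 - Φ 0 = ((∫ x in (0 : ℝ)..1, (x ^ k - x ^ l) / (x ^ n - 1) : ℝ) : ℂ) := by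
  rw [← integral_regularPart_sub_regularPart hn k l]
  simpa using ((isIntegrationPath_ofReal hU h0 h1).integral_comp_mul_eq_sub hΦ hcont
    (right_mem_Icc.2 zero_le_one)).symm

/-- Contour integral lemma: let `γ` be a piecewise-`C¹` loop in a disk `D` (containing
`0` and `1` and no `n`-th root of unity other than `1`), avoiding `1`, based at `0`,
with winding number `1` around `1`.  With
`I_k(s) = ∫₀^s γ^k γ'/(γ^n - 1)` and `J_{k,ℓ} = ∫₀¹ (x^k - x^ℓ)/(x^n - 1) dx`:
`∫_γ (I_k z^ℓ - I_ℓ z^k)/(z^n - 1) dz = (4πi/n) J_{k,ℓ}`. -/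
theorem contour_integral_lemma (n : ℕ) (hn : 1 ≤ n) (k l : ℕ)
    (c : ℂ) (R : ℝ) (γ γ' : ℝ → ℂ)
    (h0 : (0 : ℂ) ∈ Metric.ball c R) (h1 : (1 : ℂ) ∈ Metric.ball c R)
    (hroots : ∀ w ∈ Metric.ball c R, w ^ n = 1 → w = 1)
    (hmaps : ∀ s ∈ Set.Icc (0 : ℝ) 1, γ s ∈ Metric.ball c R \ {1})
    (hcont : ContinuousOn γ (Set.Icc 0 1))
    (S : Set ℝ) (hS : S.Finite)
    (hderiv : ∀ s ∈ Set.Icc (0 : ℝ) 1 \ S, HasDerivAt γ (γ' s) s)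
    (hint : IntervalIntegrable γ' volume 0 1)
    (hstart : γ 0 = 0) (hend : γ 1 = 0)
    (hwind : (1 / (2 * Real.pi * Complex.I)) *
        ∫ s in (0 : ℝ)..1, γ' s / (γ s - 1) = 1) :
    ∫ s in (0 : ℝ)..1,
        ((∫ u in (0 : ℝ)..s, γ u ^ k * γ' u / (γ u ^ n - 1)) * γ s ^ l -
          (∫ u in (0 : ℝ)..s, γ u ^ l * γ' u / (γ u ^ n - 1)) * γ s ^ k) *
          γ' s / (γ s ^ n - 1) =
      (4 * Real.pi * Complex.I / n) *
        ((∫ x in (0 : ℝ)..1, (x ^ k - x ^ l) / (x ^ n - 1) : ℝ) : ℂ) := by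
  have hn0 : n ≠ 0 := Nat.one_le_iff_ne_zero.1 hn
  have hγ : IsIntegrationPath (ball c R \ {1}) γ γ' :=
    ⟨hmaps, hcont, ⟨S, hS.countable, hderiv⟩, hint⟩
  have hreg : ∀ m, DifferentiableOn ℂ (regularPart n m) (ball c R) := fun m =>
    differentiableOn_regularPart hn0 m isOpen_ball h1 hroots
  have hsplit : ∀ m, ∀ z ∈ ball c R \ {1},
      z ^ m / (z ^ n - 1) = (n : ℂ)⁻¹ / (z - 1) + regularPart n m z := fun m z hz =>
    pow_div_pow_sub_one_eq_add_regularPart m hz.2 fun h => hz.2 (hroots z hz.1 h)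
  obtain ⟨Hk, hHk⟩ := (hreg k).isExactOn_ball
  obtain ⟨Hl, hHl⟩ := (hreg l).isExactOn_ball
  have hΩ : ∫ s in (0 : ℝ)..1, γ' s / (γ s - 1) = 2 * Real.pi * Complex.I := by
    rwa [one_div, inv_mul_eq_iff_eq_mul₀ (by simp [Real.pi_ne_zero]), mul_one] at hwind
  have hJ : Hk 1 - Hl 1 - (Hk 0 - Hl 0)
      = ((∫ x in (0 : ℝ)..1, (x ^ k - x ^ l) / (x ^ n - 1) : ℝ) : ℂ) :=
    sub_eq_integral_pow_sub_pow_div_pow_sub_one hn0 k l (convex_ball c R) h0 h1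
      (fun z hz => (hHk z hz).sub (hHl z hz)) ((hreg k).continuousOn.sub (hreg l).continuousOn)
  have key := hγ.integral_primitive_mul_sub_primitive_mul (f := fun z => z ^ k / (z ^ n - 1))
    (g := fun z => z ^ l / (z ^ n - 1)) h1 (hstart.trans hend.symm) (n : ℂ)⁻¹ (hsplit k)
    (hsplit l) (hreg k) (hreg l) hHk hHl
  rw [hΩ, hstart, hJ] at key
  convert key using 1
  · simp only [mul_div_right_comm _ (γ' _)]
    congr 1
    ext s
    ring
  · ring
end

section
/- Let n ≥ 1 and k ≥ 0 be integers and let z ∈ ℂ with |z| < 1. Then ∫₀¹ z·(tz)^k/((tz)^n − 1) dt = ∫₀¹ z·((tz)^k − (tz)^{n−1})/((tz)^n − 1) dt + (1/n)·Log(1 − z^n), where Log denotes the principal branch of the complex logarithm. -/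
open Complex

/-! On the segment `w = t z`, `0 ≤ t ≤ 1`, we have `‖w‖ < 1`, so `1 - w ^ n` lies in the slit plane
and `(1/n) · log (1 - (t z) ^ n)` is a primitive of `z (t z)^(n-1) / ((t z)^n - 1)`. Subtracting this
integrand from that of `I_k` gives the integrand of `f_k`, and the fundamental theorem of calculus
evaluates the difference as `(1/n) · log (1 - z ^ n)`. -/

lemma one_sub_mem_slitPlane_of_norm_lt_one {w : ℂ} (hw : ‖w‖ < 1) : 1 - w ∈ slitPlane := by
  simpa [sub_eq_add_neg] using mem_slitPlane_of_norm_lt_one (z := -w) (by simpa using hw)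

lemma pow_sub_one_ne_zero_of_norm_lt_one {w : ℂ} (hw : ‖w‖ < 1) {n : ℕ} (hn : n ≠ 0) :
    w ^ n - 1 ≠ 0 := by
  refine sub_ne_zero.mpr fun h => ?_
  have : ‖w‖ ^ n < 1 := pow_lt_one₀ (norm_nonneg w) hw hn
  simp [← norm_pow, h] at this

lemma norm_ofReal_mul_lt_one {t : ℝ} (ht : t ∈ Set.uIcc 0 1) {z : ℂ} (hz : ‖z‖ < 1) :
    ‖(t : ℂ) * z‖ < 1 := by
  rw [Set.uIcc_of_le zero_le_one] at ht
  rw [norm_mul, norm_real, Real.norm_of_nonneg ht.1]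
  nlinarith [norm_nonneg z, ht.2]

lemma hasDerivAt_log_one_sub_ofReal_mul_pow {n : ℕ} (hn : n ≠ 0) {z : ℂ} {t : ℝ}
    (h : ‖(t : ℂ) * z‖ < 1) :
    HasDerivAt (fun s : ℝ => (1 / (n : ℂ)) * log (1 - ((s : ℂ) * z) ^ n))
      (z * ((t : ℂ) * z) ^ (n - 1) / (((t : ℂ) * z) ^ n - 1)) t := by
  have hpow : ‖((t : ℂ) * z) ^ n‖ < 1 := by
    simpa only [norm_pow] using pow_lt_one₀ (norm_nonneg _) h hn
  have hlog := (((hasDerivAt_mul_const (x := (t : ℂ)) z).fun_pow n).const_sub (1 : ℂ)).clog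
    (one_sub_mem_slitPlane_of_norm_lt_one hpow)
  convert (hlog.const_mul (1 / (n : ℂ))).comp_ofReal using 1
  have hn' : (n : ℂ) ≠ 0 := Nat.cast_ne_zero.mpr hn
  rw [← neg_sub _ (1 : ℂ), div_neg, neg_div, neg_neg]
  field_simp

section Segment

variable {n : ℕ} {z : ℂ}

lemma intervalIntegrable_div_ofReal_mul_pow_sub_one (hn : n ≠ 0) (hz : ‖z‖ < 1) {g : ℝ → ℂ}
    (hg : ContinuousOn g (Set.uIcc 0 1)) :
    IntervalIntegrable (fun t : ℝ => g t / (((t : ℂ) * z) ^ n - 1)) MeasureTheory.volume 0 1 :=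
  (hg.div (by fun_prop) fun _ ht =>
    pow_sub_one_ne_zero_of_norm_lt_one (norm_ofReal_mul_lt_one ht hz) hn).intervalIntegrable

lemma integral_pow_pred_div_pow_sub_one (hn : n ≠ 0) (hz : ‖z‖ < 1) :
    ∫ t in (0 : ℝ)..1, z * ((t : ℂ) * z) ^ (n - 1) / (((t : ℂ) * z) ^ n - 1) =
      (1 / (n : ℂ)) * log (1 - z ^ n) := by
  rw [intervalIntegral.integral_eq_sub_of_hasDerivAt
    (fun t ht => hasDerivAt_log_one_sub_ofReal_mul_pow hn (norm_ofReal_mul_lt_one ht hz))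
    (intervalIntegrable_div_ofReal_mul_pow_sub_one hn hz (by fun_prop))]
  simp [zero_pow hn]

end Segment

/-- Decomposition `I_k(z) = f_k(z) + (1/n)·Log(1 - z^n)` along the segment from `0`
to `z`, for `|z| < 1`:
`∫₀¹ z (tz)^k/((tz)^n - 1) dt = ∫₀¹ z ((tz)^k - (tz)^{n-1})/((tz)^n - 1) dt
  + (1/n)·Log(1 - z^n)`. -/
theorem I_eq_f_add_log (n : ℕ) (hn : 1 ≤ n) (k : ℕ) (z : ℂ) (hz : ‖z‖ < 1) :
    ∫ t in (0 : ℝ)..1, z * ((t : ℂ) * z) ^ k / (((t : ℂ) * z) ^ n - 1) =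
      (∫ t in (0 : ℝ)..1,
          z * (((t : ℂ) * z) ^ k - ((t : ℂ) * z) ^ (n - 1)) / (((t : ℂ) * z) ^ n - 1)) +
        (1 / (n : ℂ)) * Complex.log (1 - z ^ n) := by
  have hn0 : n ≠ 0 := Nat.one_le_iff_ne_zero.mp hn
  rw [← integral_pow_pred_div_pow_sub_one hn0 hz, ← intervalIntegral.integral_add
    (intervalIntegrable_div_ofReal_mul_pow_sub_one hn0 hz (by fun_prop))
    (intervalIntegrable_div_ofReal_mul_pow_sub_one hn0 hz (by fun_prop))]
  refine intervalIntegral.integral_congr fun t _ => ?_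
  simp only [← add_div]
  ring
end
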